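/- Translation for some implication formulas: Let L and L_f be finite lattices, f : L → L_f a function preserving arbitrary bounds, and M an mv-CGS over L. Let φ be a formula of mv-ATL*→ such that for every implication subformula φ1→φ2 of φ and every state q, writing x1 = [[φ1]]_{M,q} and x2 = [[φ2]]_{M,q}, the following hold: (C1') if x1 and x2 are comparable and distinct then f preserves their strict order (x1 < x2 implies f(x1) < f(x2), and x2 < x1 implies f(x2) < f(x1)); and (C2') if x1 and x2 are incomparable then f(x1) > f(x2). Then φ satisfies the translation condition: f([[φ]]_{M,ξ}) = [[φ]]_{f(M),ξ} for every state or path ξ. -/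
import Mathlib


open Classical

/-- A concurrent game structure (CGS): availability function `d` (with every
`d a q` nonempty) and a deterministic transition function `t`. -/
structure CGS (Agt St Act : Type*) where
  d : Agt → St → Set Act
  d_nonempty : ∀ a q, (d a q).Nonempty
  t : St → (Agt → Act) → St

namespace CGS

variable {Agt St Act : Type*}

/-- An action profile `α` is available at state `q`. -/
def Avail (G : CGS Agt St Act) (q : St) (α : Agt → Act) : Prop :=
  ∀ a, α a ∈ G.d a q

/-- `lam` is a path of `G`: each step is realized by some available profile. -/
def IsPath (G : CGS Agt St Act) (lam : ℕ → St) : Prop :=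
  ∀ i, ∃ α, G.Avail (lam i) α ∧ G.t (lam i) α = lam (i + 1)

/-- A perfect-recall strategy for agent `a`: a choice of an available action
for every nonempty finite history, represented as (proper prefix, last state). -/
structure PRStrategy (G : CGS Agt St Act) (a : Agt) where
  act : List St → St → Act
  avail : ∀ h q, act h q ∈ G.d a q

/-- A collective perfect-recall strategy for the coalition `A`. -/
def PRColl (G : CGS Agt St Act) (A : Set Agt) := (a : A) → PRStrategy G (a : Agt)

/-- The outcome set of a collective perfect-recall strategy `s` from state `q`. -/
def prOut (G : CGS Agt St Act) {A : Set Agt} (q : St) (s : PRColl G A) : Set (ℕ → St) :=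
  { lam | lam 0 = q ∧ ∀ i, ∃ α, G.Avail (lam i) α ∧ G.t (lam i) α = lam (i + 1) ∧
      ∀ a : A, α (a : Agt) = (s a).act (List.ofFn fun j : Fin i => lam j) (lam i) }

end CGS

mutual
/-- State formulas of mv-ATL*→ (mv-ATL* extended with the two-valued
implication operator `→`). -/
inductive SFormI (AP C Agt : Type) : Type
  | const : C → SFormI AP C Agt
  | atom  : AP → SFormI AP C Agt
  | and   : SFormI AP C Agt → SFormI AP C Agt → SFormI AP C Agt
  | or    : SFormI AP C Agt → SFormI AP C Agt → SFormI AP C Agt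
  | imp   : SFormI AP C Agt → SFormI AP C Agt → SFormI AP C Agt
  | coop  : Set Agt → PFormI AP C Agt → SFormI AP C Agt
  | nec   : Set Agt → PFormI AP C Agt → SFormI AP C Agt
/-- Path formulas of mv-ATL*→. -/
inductive PFormI (AP C Agt : Type) : Type
  | state : SFormI AP C Agt → PFormI AP C Agt
  | and   : PFormI AP C Agt → PFormI AP C Agt → PFormI AP C Agt
  | or    : PFormI AP C Agt → PFormI AP C Agt → PFormI AP C Agt
  | next  : PFormI AP C Agt → PFormI AP C Agt
  | untl  : PFormI AP C Agt → PFormI AP C Agt → PFormI AP C Agt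
  | wuntl : PFormI AP C Agt → PFormI AP C Agt → PFormI AP C Agt
end

variable {Agt St Act AP C : Type} {L : Type*} [CompleteLattice L]

mutual
/-- Multi-valued truth value of a state formula of mv-ATL*→ at a state;
`[[φ1 → φ2]] = ⊤` if `[[φ1]] ≤ [[φ2]]` and `⊥` otherwise. -/
noncomputable def svalI (G : CGS Agt St Act) (σ : C → L) (V : AP → St → L) :
    SFormI AP C Agt → St → L
  | .const c, _ => σ c
  | .atom p, q => V p q
  | .and φ ψ, q => svalI G σ V φ q ⊓ svalI G σ V ψ q
  | .or φ ψ, q => svalI G σ V φ q ⊔ svalI G σ V ψ q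
  | .imp φ ψ, q => if svalI G σ V φ q ≤ svalI G σ V ψ q then ⊤ else ⊥
  | .coop A γ, q => ⨆ s : CGS.PRColl G A, ⨅ lam ∈ CGS.prOut G q s, pvalI G σ V γ lam
  | .nec A γ, q => ⨅ s : CGS.PRColl G A, ⨆ lam ∈ CGS.prOut G q s, pvalI G σ V γ lam

/-- Multi-valued truth value of a path formula of mv-ATL*→ on a path. -/
noncomputable def pvalI (G : CGS Agt St Act) (σ : C → L) (V : AP → St → L) :
    PFormI AP C Agt → (ℕ → St) → L
  | .state φ, lam => svalI G σ V φ (lam 0)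
  | .and γ δ, lam => pvalI G σ V γ lam ⊓ pvalI G σ V δ lam
  | .or γ δ, lam => pvalI G σ V γ lam ⊔ pvalI G σ V δ lam
  | .next γ, lam => pvalI G σ V γ (fun k => lam (k + 1))
  | .untl γ δ, lam =>
      ⨆ i : ℕ, (pvalI G σ V δ (fun k => lam (k + i)) ⊓
        ⨅ j : Fin i, pvalI G σ V γ (fun k => lam (k + (j : ℕ))))
  | .wuntl γ δ, lam =>
      (⨅ i : ℕ, pvalI G σ V γ (fun k => lam (k + i))) ⊔
      ⨆ i : ℕ, (pvalI G σ V δ (fun k => lam (k + i)) ⊓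
        ⨅ j : Fin i, pvalI G σ V γ (fun k => lam (k + (j : ℕ))))
end

/-- A function between complete lattices preserves arbitrary bounds if it
commutes with arbitrary suprema and infima. -/
def PreservesBounds {L L' : Type*} [CompleteLattice L] [CompleteLattice L'] (f : L → L') : Prop :=
  (∀ S : Set L, f (sSup S) = sSup (f '' S)) ∧ (∀ S : Set L, f (sInf S) = sInf (f '' S))

mutual
/-- The implication subformulas (as pairs of antecedent/consequent) of a state
formula of mv-ATL*→. -/
def sImps {AP C Agt : Type} : SFormI AP C Agt → List (SFormI AP C Agt × SFormI AP C Agt)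
  | .const _ => []
  | .atom _ => []
  | .and φ ψ => sImps φ ++ sImps ψ
  | .or φ ψ => sImps φ ++ sImps ψ
  | .imp φ ψ => (φ, ψ) :: (sImps φ ++ sImps ψ)
  | .coop _ γ => pImps γ
  | .nec _ γ => pImps γ
/-- The implication subformulas of a path formula of mv-ATL*→. -/
def pImps {AP C Agt : Type} : PFormI AP C Agt → List (SFormI AP C Agt × SFormI AP C Agt)
  | .state φ => sImps φ
  | .and γ δ => pImps γ ++ pImps δ
  | .or γ δ => pImps γ ++ pImps δ
  | .next γ => pImps γ
  | .untl γ δ => pImps γ ++ pImps δ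
  | .wuntl γ δ => pImps γ ++ pImps δ
end

/-- Conditions C1' and C2' for one implication subformula `φ1 → φ2` at a state
`q`, with `x1 = [[φ1]]_{M,q}` and `x2 = [[φ2]]_{M,q}`: if `x1` and `x2` are
comparable and distinct then `f` preserves their strict order, and if they are
incomparable then `f x1 > f x2`. -/
def CondAt {L L' : Type*} [CompleteLattice L] [CompleteLattice L']
    {Agt St Act AP C : Type} (f : L → L')
    (G : CGS Agt St Act) (σ : C → L) (V : AP → St → L)
    (pr : SFormI AP C Agt × SFormI AP C Agt) (q : St) : Prop :=
  (svalI G σ V pr.1 q < svalI G σ V pr.2 q →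
      f (svalI G σ V pr.1 q) < f (svalI G σ V pr.2 q)) ∧
  (svalI G σ V pr.2 q < svalI G σ V pr.1 q →
      f (svalI G σ V pr.2 q) < f (svalI G σ V pr.1 q)) ∧
  ((¬ svalI G σ V pr.1 q ≤ svalI G σ V pr.2 q ∧ ¬ svalI G σ V pr.2 q ≤ svalI G σ V pr.1 q) →
      f (svalI G σ V pr.2 q) < f (svalI G σ V pr.1 q))

section Helpers

variable {L L' : Type*} [CompleteLattice L] [CompleteLattice L'] {f : L → L'}

lemma pb_iSup (hf : PreservesBounds f) {ι : Sort*} (g : ι → L) :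
    f (⨆ i, g i) = ⨆ i, f (g i) := by
  rw [iSup, hf.1, ← Set.range_comp, iSup]; rfl

lemma pb_iInf (hf : PreservesBounds f) {ι : Sort*} (g : ι → L) :
    f (⨅ i, g i) = ⨅ i, f (g i) := by
  rw [iInf, hf.2, ← Set.range_comp, iInf]; rfl

lemma pb_sup (hf : PreservesBounds f) (x y : L) : f (x ⊔ y) = f x ⊔ f y := by
  have := hf.1 {x, y}
  simpa [Set.image_pair] using this

lemma pb_inf (hf : PreservesBounds f) (x y : L) : f (x ⊓ y) = f x ⊓ f y := by
  have := hf.2 {x, y}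
  simpa [Set.image_pair] using this

lemma pb_top (hf : PreservesBounds f) : f ⊤ = ⊤ := by
  have := hf.2 (∅ : Set L); simpa using this

lemma pb_bot (hf : PreservesBounds f) : f ⊥ = ⊥ := by
  have := hf.1 (∅ : Set L); simpa using this

lemma pb_mono (hf : PreservesBounds f) {x y : L} (h : x ≤ y) : f x ≤ f y := by
  have : f y = f x ⊔ f y := by rw [← pb_sup hf, sup_eq_right.2 h]
  rw [this]; exact le_sup_left

end Helpers

lemma isPath_shift {Agt St Act : Type*} (G : CGS Agt St Act) {lam : ℕ → St}
    (h : G.IsPath lam) (i : ℕ) : G.IsPath (fun k => lam (k + i)) := by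
  intro j
  simpa [Nat.add_right_comm] using h (j + i)

lemma isPath_of_mem_prOut {Agt St Act : Type*} {G : CGS Agt St Act} {A : Set Agt}
    {q : St} {s : CGS.PRColl G A} {lam : ℕ → St} (h : lam ∈ CGS.prOut G q s) :
    G.IsPath lam := by
  intro i
  obtain ⟨α, h1, h2, _⟩ := h.2 i
  exact ⟨α, h1, h2⟩

section Main

variable {L L' : Type*} [CompleteLattice L] [CompleteLattice L']
  {Agt St Act AP C : Type}

mutual
theorem sAux (f : L → L') (hf : PreservesBounds f)
    (G : CGS Agt St Act) (σ : C → L) (V : AP → St → L)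
    (φ : SFormI AP C Agt)
    (h : ∀ pr ∈ sImps φ, ∀ q : St, CondAt f G σ V pr q) :
    ∀ q : St, f (svalI G σ V φ q) =
      svalI G (fun c => f (σ c)) (fun p q' => f (V p q')) φ q := by
  intro q
  cases φ with
  | const c => simp [svalI]
  | atom p => simp [svalI]
  | and φ ψ =>
      have hφ := sAux f hf G σ V φ (fun pr hpr => h pr (by simp [sImps, hpr]))
      have hψ := sAux f hf G σ V ψ (fun pr hpr => h pr (by simp [sImps, hpr]))
      simp only [svalI, pb_inf hf, hφ q, hψ q]
  | or φ ψ =>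
      have hφ := sAux f hf G σ V φ (fun pr hpr => h pr (by simp [sImps, hpr]))
      have hψ := sAux f hf G σ V ψ (fun pr hpr => h pr (by simp [sImps, hpr]))
      simp only [svalI, pb_sup hf, hφ q, hψ q]
  | imp φ ψ =>
      have hφ := sAux f hf G σ V φ (fun pr hpr => h pr (by simp [sImps, hpr]))
      have hψ := sAux f hf G σ V ψ (fun pr hpr => h pr (by simp [sImps, hpr]))
      have hc : CondAt f G σ V (φ, ψ) q := h (φ, ψ) (by simp [sImps]) q
      simp only [svalI, ← hφ q, ← hψ q]
      set x1 := svalI G σ V φ q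
      set x2 := svalI G σ V ψ q
      by_cases hle : x1 ≤ x2
      · rw [if_pos hle, if_pos (pb_mono hf hle), pb_top hf]
      · have hlt : f x2 < f x1 := by
          by_cases h21 : x2 ≤ x1
          · exact hc.2.1 (lt_of_le_of_ne h21 (fun he => hle (le_of_eq he.symm)))
          · exact hc.2.2 ⟨hle, h21⟩
        rw [if_neg hle, if_neg (not_le_of_gt hlt), pb_bot hf]
  | coop A γ =>
      have hγ := pAux f hf G σ V γ (fun pr hpr => h pr (by simp [sImps, hpr]))
      simp only [svalI, pb_iSup hf, pb_iInf hf]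
      refine iSup_congr fun s => iInf_congr fun lam => iInf_congr fun hlam => ?_
      exact hγ lam (isPath_of_mem_prOut hlam)
  | nec A γ =>
      have hγ := pAux f hf G σ V γ (fun pr hpr => h pr (by simp [sImps, hpr]))
      simp only [svalI, pb_iInf hf, pb_iSup hf]
      refine iInf_congr fun s => iSup_congr fun lam => iSup_congr fun hlam => ?_
      exact hγ lam (isPath_of_mem_prOut hlam)

theorem pAux (f : L → L') (hf : PreservesBounds f)
    (G : CGS Agt St Act) (σ : C → L) (V : AP → St → L)
    (γ : PFormI AP C Agt)
    (h : ∀ pr ∈ pImps γ, ∀ q : St, CondAt f G σ V pr q) :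
    ∀ lam : ℕ → St, G.IsPath lam → f (pvalI G σ V γ lam) =
      pvalI G (fun c => f (σ c)) (fun p q' => f (V p q')) γ lam := by
  intro lam hp
  cases γ with
  | state φ =>
      have hφ := sAux f hf G σ V φ (fun pr hpr => h pr (by simp [pImps, hpr]))
      simpa [pvalI] using hφ (lam 0)
  | and γ δ =>
      have hγ := pAux f hf G σ V γ (fun pr hpr => h pr (by simp [pImps, hpr]))
      have hδ := pAux f hf G σ V δ (fun pr hpr => h pr (by simp [pImps, hpr]))
      simp only [pvalI, pb_inf hf, hγ lam hp, hδ lam hp]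
  | or γ δ =>
      have hγ := pAux f hf G σ V γ (fun pr hpr => h pr (by simp [pImps, hpr]))
      have hδ := pAux f hf G σ V δ (fun pr hpr => h pr (by simp [pImps, hpr]))
      simp only [pvalI, pb_sup hf, hγ lam hp, hδ lam hp]
  | next γ =>
      have hγ := pAux f hf G σ V γ (fun pr hpr => h pr (by simp [pImps, hpr]))
      simp only [pvalI]
      exact hγ _ (isPath_shift G hp 1)
  | untl γ δ =>
      have hγ := pAux f hf G σ V γ (fun pr hpr => h pr (by simp [pImps, hpr]))
      have hδ := pAux f hf G σ V δ (fun pr hpr => h pr (by simp [pImps, hpr]))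
      simp only [pvalI, pb_iSup hf, pb_inf hf, pb_iInf hf]
      refine iSup_congr fun i => ?_
      rw [hδ _ (isPath_shift G hp i)]
      exact congrArg _ (iInf_congr fun j => hγ _ (isPath_shift G hp j))
  | wuntl γ δ =>
      have hγ := pAux f hf G σ V γ (fun pr hpr => h pr (by simp [pImps, hpr]))
      have hδ := pAux f hf G σ V δ (fun pr hpr => h pr (by simp [pImps, hpr]))
      simp only [pvalI, pb_sup hf, pb_iSup hf, pb_inf hf, pb_iInf hf]
      congr 1
      · exact iInf_congr fun i => hγ _ (isPath_shift G hp i)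
      · refine iSup_congr fun i => ?_
        rw [hδ _ (isPath_shift G hp i)]
        exact congrArg _ (iInf_congr fun j => hγ _ (isPath_shift G hp j))
end

end Main

/-- Translation for some implication formulas: if `f` preserves arbitrary
bounds and every implication subformula of the given formula satisfies C1' and
C2' at every state, then the formula satisfies the translation condition at
every state (and, for path formulas, on every path). -/
theorem stmt_18 {L L' : Type*} [CompleteLattice L] [Fintype L] [CompleteLattice L'] [Fintype L']
    (f : L → L') (hf : PreservesBounds f)
    {Agt St Act AP C : Type} [Fintype Agt] [Fintype St] [Fintype Act]
    [Nonempty Agt] [Nonempty St] [Nonempty Act]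
    (G : CGS Agt St Act) (σ : C → L) (V : AP → St → L) :
    (∀ φ : SFormI AP C Agt,
      (∀ pr ∈ sImps φ, ∀ q : St, CondAt f G σ V pr q) →
      ∀ q : St, f (svalI G σ V φ q) =
        svalI G (fun c => f (σ c)) (fun p q' => f (V p q')) φ q) ∧
    (∀ γ : PFormI AP C Agt,
      (∀ pr ∈ pImps γ, ∀ q : St, CondAt f G σ V pr q) →
      ∀ lam : ℕ → St, G.IsPath lam → f (pvalI G σ V γ lam) =
        pvalI G (fun c => f (σ c)) (fun p q' => f (V p q')) γ lam) :=
  ⟨fun φ h => sAux f hf G σ V φ h, fun γ h => pAux f hf G σ V γ h⟩
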